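/- arXiv:1010.6121 — 2 statements merged into one kernel-verified Lean document; each statement's English description precedes it below -/
import Mathlib

section
/- Let ℒ_{t,T} : L²(D) → L²(D) be the adjoints of the transition operators ℒ*_{t,T}, satisfying the cocycle property ℒ_{θ,T} = ℒ_{θ,t}ℒ_{t,T} for θ ≤ t ≤ T, uniform norm bounds ‖ℒ_{θ,t}‖ ≤ c₀, and the continuity property that ((ℒ*_{θ,t} − I)ξ', ξ) → 0 and (ξ', (ℒ_{θ,t} − I)ξ) → 0 for bounded families as t − θ → 0⁺. Then for ζ ∈ L²(D), the function u(·,t) = ℒ_{t,T}ζ is weakly continuous in t and strongly left-continuous: ‖u(·,t) − u(·,θ)‖_{L²(D)} → 0 as θ → t⁻. -/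
/-!
Weak continuity: by the cocycle identity, `u(θ) - u(t) = (ℒ_{θ,t} - I) u(t)` for `θ ≤ t`, and the
weak continuity hypothesis on `ℒ` makes its pairing with any fixed `ξ` small, uniformly in `t`.

Strong left-continuity: with `w = u(t)` and `d = (ℒ_{θ,t} - I) w = u(θ) - u(t)`, the adjoint relation gives
`‖d‖² = (w, (ℒ*_{θ,t} - I) d)`, which the weak continuity hypothesis on `ℒ*` makes small.
-/

open Set Filter Topology MeasureTheory

open scoped RealInnerProductSpace

section TransitionOperators

variable {E : Type*} [NormedAddCommGroup E] [InnerProductSpace ℝ E]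

def WeaklyNearIdentity (T : ℝ) (A : ℝ → ℝ → E →L[ℝ] E) : Prop :=
  ∀ u u' : ℝ → ℝ → E, ∀ C : ℝ, (∀ a b, ‖u a b‖ ≤ C) → (∀ a b, ‖u' a b‖ ≤ C) →
    ∀ δ > (0 : ℝ), ∃ η > (0 : ℝ), ∀ θ t : ℝ, 0 ≤ θ → θ ≤ t → t ≤ T → t - θ < η →
      |⟪u' θ t, A θ t (u θ t) - u θ t⟫| < δ

variable {T : ℝ} {A : ℝ → ℝ → E →L[ℝ] E}

lemma weaklyNearIdentity_of_inner_comm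
    (h : ∀ u u' : ℝ → ℝ → E, ∀ C : ℝ, (∀ a b, ‖u a b‖ ≤ C) → (∀ a b, ‖u' a b‖ ≤ C) →
      ∀ δ > (0 : ℝ), ∃ η > (0 : ℝ), ∀ θ t : ℝ, 0 ≤ θ → θ ≤ t → t ≤ T → t - θ < η →
        |⟪A θ t (u θ t) - u θ t, u' θ t⟫| < δ) :
    WeaklyNearIdentity T A := by
  intro u u' C hu hu' δ hδ
  obtain ⟨η, hη, h⟩ := h u u' C hu hu' δ hδ
  exact ⟨η, hη, fun θ t h₀ hθt htT hlt => real_inner_comm (u' θ t) _ ▸ h θ t h₀ hθt htT hlt⟩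

lemma WeaklyNearIdentity.exists_forall_abs_inner_lt (hA : WeaklyNearIdentity T A)
    {u u' : ℝ → ℝ → E} {C : ℝ}
    (hu : ∀ a b, 0 ≤ a → a ≤ b → b ≤ T → ‖u a b‖ ≤ C)
    (hu' : ∀ a b, 0 ≤ a → a ≤ b → b ≤ T → ‖u' a b‖ ≤ C) {δ : ℝ} (hδ : 0 < δ) :
    ∃ η > (0 : ℝ), ∀ θ t : ℝ, 0 ≤ θ → θ ≤ t → t ≤ T → t - θ < η →
      |⟪u' θ t, A θ t (u θ t) - u θ t⟫| < δ := by
  classical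
  let cut (v : ℝ → ℝ → E) (a b : ℝ) : E := if 0 ≤ a ∧ a ≤ b ∧ b ≤ T then v a b else 0
  have hcut : ∀ v : ℝ → ℝ → E, (∀ a b, 0 ≤ a → a ≤ b → b ≤ T → ‖v a b‖ ≤ C) →
      ∀ a b, ‖cut v a b‖ ≤ max C 0 := by
    intro v hv a b
    by_cases h : 0 ≤ a ∧ a ≤ b ∧ b ≤ T
    · simpa only [cut, if_pos h] using (hv a b h.1 h.2.1 h.2.2).trans (le_max_left C 0)
    · simp only [cut, if_neg h, norm_zero, le_max_right]
  obtain ⟨η, hη, hsmall⟩ := hA (cut u) (cut u') (max C 0) (hcut u hu) (hcut u' hu') δ hδ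
  refine ⟨η, hη, fun θ t h₀ hθt htT hlt => ?_⟩
  have hadm : 0 ≤ θ ∧ θ ≤ t ∧ t ≤ T := ⟨h₀, hθt, htT⟩
  simpa only [cut, if_pos hadm] using hsmall θ t h₀ hθt htT hlt

lemma norm_apply_sub_self_sq_eq_inner {A Aadj : E →L[ℝ] E} (hadj : ∀ x y, ⟪A x, y⟫ = ⟪x, Aadj y⟫)
    (w : E) : ‖A w - w‖ ^ 2 = ⟪w, Aadj (A w - w) - (A w - w)⟫ := by
  rw [← real_inner_self_eq_norm_sq, inner_sub_left, hadj, ← inner_sub_right]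

variable {c : ℝ}

lemma WeaklyNearIdentity.uniformContinuousOn_inner (hA : WeaklyNearIdentity T A)
    (hcoc : ∀ θ t : ℝ, 0 ≤ θ → θ ≤ t → t ≤ T → A θ T = (A θ t).comp (A t T))
    (hbd : ∀ a b : ℝ, 0 ≤ a → a ≤ b → b ≤ T → ‖A a b‖ ≤ c) (ζ ξ : E) :
    UniformContinuousOn (fun t => ⟪ξ, A t T ζ⟫) (Icc 0 T) := by
  rw [Metric.uniformContinuousOn_iff]
  intro ε hε
  have hbdu : ∀ a b, 0 ≤ a → a ≤ b → b ≤ T → ‖A b T ζ‖ ≤ c * ‖ζ‖ + ‖ξ‖ := fun a b h₀ hab hbT =>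
    ((A b T).le_of_opNorm_le (hbd b T (h₀.trans hab) hbT le_rfl) ζ).trans
      (le_add_of_nonneg_right (norm_nonneg ξ))
  have hbdξ : ∀ a b, 0 ≤ a → a ≤ b → b ≤ T → ‖ξ‖ ≤ c * ‖ζ‖ + ‖ξ‖ := fun a b h₀ hab hbT =>
    le_add_of_nonneg_left (mul_nonneg ((norm_nonneg _).trans (hbd b T (h₀.trans hab) hbT le_rfl))
      (norm_nonneg ζ))
  obtain ⟨η, hη, hsmall⟩ := hA.exists_forall_abs_inner_lt (u := fun _ b => A b T ζ)
    (u' := fun _ _ => ξ) hbdu hbdξ hε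
  have hordered : ∀ θ ∈ Icc 0 T, ∀ t ∈ Icc 0 T, θ ≤ t → t - θ < η →
      dist ⟪ξ, A θ T ζ⟫ ⟪ξ, A t T ζ⟫ < ε := by
    intro θ hθ t ht hθt hlt
    have hsplit : A θ T ζ = A θ t (A t T ζ) := by rw [hcoc θ t hθ.1 hθt ht.2]; rfl
    rw [Real.dist_eq, ← inner_sub_right, hsplit]
    exact hsmall θ t hθ.1 hθt ht.2 hlt
  refine ⟨η, hη, fun s hs t ht hst => ?_⟩
  rw [Real.dist_eq, abs_sub_lt_iff] at hst
  rcases le_total s t with hle | hle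
  · exact hordered s hs t ht hle hst.2
  · exact dist_comm (α := ℝ) _ _ ▸ hordered t ht s hs hle hst.1

lemma WeaklyNearIdentity.tendsto_norm_sub {Aadj : ℝ → ℝ → E →L[ℝ] E}
    (hAadj : WeaklyNearIdentity T Aadj) (hadj : ∀ a b x y, ⟪A a b x, y⟫ = ⟪x, Aadj a b y⟫)
    (hcoc : ∀ θ t : ℝ, 0 ≤ θ → θ ≤ t → t ≤ T → A θ T = (A θ t).comp (A t T))
    (hbd : ∀ a b : ℝ, 0 ≤ a → a ≤ b → b ≤ T → ‖A a b‖ ≤ c) (ζ : E) {t : ℝ} (ht : t ∈ Ioc 0 T) :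
    Tendsto (fun θ => ‖A t T ζ - A θ T ζ‖) (𝓝[Ico 0 t] t) (𝓝 0) := by
  rw [Metric.tendsto_nhdsWithin_nhds]
  intro ε hε
  set w := A t T ζ
  have hbdd : ∀ a b, 0 ≤ a → a ≤ b → b ≤ T → ‖A a b w - w‖ ≤ (c + 1) * ‖w‖ := by
    intro a b h₀ hab hbT
    calc ‖A a b w - w‖ ≤ ‖A a b w‖ + ‖w‖ := norm_sub_le _ _
      _ ≤ c * ‖w‖ + ‖w‖ := by gcongr; exact (A a b).le_of_opNorm_le (hbd a b h₀ hab hbT) w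
      _ = (c + 1) * ‖w‖ := by ring
  have hbdw : ∀ a b, 0 ≤ a → a ≤ b → b ≤ T → ‖w‖ ≤ (c + 1) * ‖w‖ := fun a b h₀ hab hbT => by
    have hc : 0 ≤ c := (norm_nonneg _).trans (hbd a b h₀ hab hbT)
    nlinarith [norm_nonneg w]
  obtain ⟨η, hη, hsmall⟩ := hAadj.exists_forall_abs_inner_lt (u := fun a b => A a b w - w)
    (u' := fun _ _ => w) hbdd hbdw (pow_pos hε 2)
  refine ⟨η, hη, fun θ hθ hdist => ?_⟩
  rw [Real.dist_eq, abs_lt] at hdist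
  have hsplit : A t T ζ - A θ T ζ = -(A θ t w - w) := by
    rw [hcoc θ t hθ.1 hθ.2.le ht.2]
    simp only [ContinuousLinearMap.comp_apply, w, neg_sub]
  have hsq : ‖A t T ζ - A θ T ζ‖ ^ 2 < ε ^ 2 := by
    rw [hsplit, norm_neg, norm_apply_sub_self_sq_eq_inner (hadj θ t)]
    exact (le_abs_self _).trans_lt (hsmall θ t hθ.1 hθ.2.le ht.2 (by linarith))
  rw [dist_zero_right, norm_norm]
  exact lt_of_pow_lt_pow_left₀ 2 hε.le hsq

end TransitionOperators

theorem stmt13_general {n : ℕ} (D : Set (EuclideanSpace ℝ (Fin n)))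
    (T c₀ : ℝ)
    -- ℒ_{a,b} : the adjoints of the transition operators ℒ*_{a,b}
    (L Lstar : ℝ → ℝ → Lp ℝ 2 (volume.restrict D) →L[ℝ] Lp ℝ 2 (volume.restrict D))
    (hadj : ∀ a b : ℝ, ∀ ξ η : Lp ℝ 2 (volume.restrict D),
      (inner ℝ (L a b ξ) η : ℝ) = inner ℝ ξ (Lstar a b η))
    -- cocycle property ℒ_{θ,T} = ℒ_{θ,t} ℒ_{t,T}
    (hcoc : ∀ θ t : ℝ, 0 ≤ θ → θ ≤ t → t ≤ T →
      L θ T = (L θ t).comp (L t T))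
    -- uniform norm bounds
    (hbdL : ∀ a b : ℝ, 0 ≤ a → a ≤ b → b ≤ T → ‖L a b‖ ≤ c₀)
    -- the continuity property for bounded families as t − θ → 0⁺
    (hweakLstar : ∀ u u' : ℝ → ℝ → Lp ℝ 2 (volume.restrict D), ∀ C : ℝ,
      (∀ a b, ‖u a b‖ ≤ C) → (∀ a b, ‖u' a b‖ ≤ C) →
      ∀ δ > (0:ℝ), ∃ η > (0:ℝ), ∀ θ t : ℝ, 0 ≤ θ → θ ≤ t → t ≤ T → t - θ < η →
        |(inner ℝ (Lstar θ t (u θ t) - u θ t) (u' θ t) : ℝ)| < δ)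
    (hweakL : ∀ u u' : ℝ → ℝ → Lp ℝ 2 (volume.restrict D), ∀ C : ℝ,
      (∀ a b, ‖u a b‖ ≤ C) → (∀ a b, ‖u' a b‖ ≤ C) →
      ∀ δ > (0:ℝ), ∃ η > (0:ℝ), ∀ θ t : ℝ, 0 ≤ θ → θ ≤ t → t ≤ T → t - θ < η →
        |(inner ℝ (u' θ t) (L θ t (u θ t) - u θ t) : ℝ)| < δ)
    (ζ : Lp ℝ 2 (volume.restrict D)) :
    -- u(·,t) = ℒ_{t,T} ζ is weakly continuous in t …
    (∀ ξ : Lp ℝ 2 (volume.restrict D),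
      ContinuousOn (fun t => (inner ℝ ξ (L t T ζ) : ℝ)) (Icc 0 T)) ∧
    -- … and strongly left-continuous
    (∀ t ∈ Ioc (0:ℝ) T,
      Tendsto (fun θ => ‖L t T ζ - L θ T ζ‖) (nhdsWithin t (Ico 0 t)) (nhds 0)) :=
  ⟨fun ξ => (WeaklyNearIdentity.uniformContinuousOn_inner hweakL hcoc hbdL ζ ξ).continuousOn,
    fun _ ht => (weaklyNearIdentity_of_inner_comm hweakLstar).tendsto_norm_sub hadj hcoc hbdL ζ ht⟩

theorem stmt13 {n : ℕ} (D : Set (EuclideanSpace ℝ (Fin n)))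
    (T c₀ : ℝ) (hT : 0 ≤ T)
    -- ℒ_{a,b} : the adjoints of the transition operators ℒ*_{a,b}
    (L Lstar : ℝ → ℝ → Lp ℝ 2 (volume.restrict D) →L[ℝ] Lp ℝ 2 (volume.restrict D))
    (hadj : ∀ a b : ℝ, ∀ ξ η : Lp ℝ 2 (volume.restrict D),
      (inner ℝ (L a b ξ) η : ℝ) = inner ℝ ξ (Lstar a b η))
    -- cocycle property ℒ_{θ,T} = ℒ_{θ,t} ℒ_{t,T}
    (hcoc : ∀ θ t : ℝ, 0 ≤ θ → θ ≤ t → t ≤ T →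
      L θ T = (L θ t).comp (L t T))
    -- uniform norm bounds
    (hbdL : ∀ a b : ℝ, 0 ≤ a → a ≤ b → b ≤ T → ‖L a b‖ ≤ c₀)
    (hbdLstar : ∀ a b : ℝ, 0 ≤ a → a ≤ b → b ≤ T → ‖Lstar a b‖ ≤ c₀)
    -- the continuity property for bounded families as t − θ → 0⁺
    (hweakLstar : ∀ u u' : ℝ → ℝ → Lp ℝ 2 (volume.restrict D), ∀ C : ℝ,
      (∀ a b, ‖u a b‖ ≤ C) → (∀ a b, ‖u' a b‖ ≤ C) →
      ∀ δ > (0:ℝ), ∃ η > (0:ℝ), ∀ θ t : ℝ, 0 ≤ θ → θ ≤ t → t ≤ T → t - θ < η →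
        |(inner ℝ (Lstar θ t (u θ t) - u θ t) (u' θ t) : ℝ)| < δ)
    (hweakL : ∀ u u' : ℝ → ℝ → Lp ℝ 2 (volume.restrict D), ∀ C : ℝ,
      (∀ a b, ‖u a b‖ ≤ C) → (∀ a b, ‖u' a b‖ ≤ C) →
      ∀ δ > (0:ℝ), ∃ η > (0:ℝ), ∀ θ t : ℝ, 0 ≤ θ → θ ≤ t → t ≤ T → t - θ < η →
        |(inner ℝ (u' θ t) (L θ t (u θ t) - u θ t) : ℝ)| < δ)
    (ζ : Lp ℝ 2 (volume.restrict D)) :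
    -- u(·,t) = ℒ_{t,T} ζ is weakly continuous in t …
    (∀ ξ : Lp ℝ 2 (volume.restrict D),
      ContinuousOn (fun t => (inner ℝ ξ (L t T ζ) : ℝ)) (Icc 0 T)) ∧
    -- … and strongly left-continuous
    (∀ t ∈ Ioc (0:ℝ) T,
      Tendsto (fun θ => ‖L t T ζ - L θ T ζ‖) (nhdsWithin t (Ico 0 t)) (nhds 0)) :=
  stmt13_general D T c₀ L Lstar hadj hcoc hbdL hweakLstar hweakL ζ
end

section
/- Let two families of bounded operators ℒ_{s,t}, ℒ*_{s,t} on L²(D) be mutually adjoint, satisfy the cocycle identities ℒ*_{s,t} = ℒ*_{θ,t}ℒ*_{s,θ} (s ≤ θ ≤ t), uniform bounds ‖ℒ_{s,t}‖, ‖ℒ*_{s,t}‖ ≤ c₀, and the property that for every ξ ∈ L²(D) and every bounded family {u_{θ,t}} one has (ξ, (ℒ*_{θ,t} − I)u_{θ,t}) → 0 and ((ℒ_{θ,t} − I)u_{θ,t}, ξ) → 0 as t − θ → 0⁺. Let φ ∈ L¹([0,T] → L²(D)) and v(·,s) defined by (v(·,s), ρ) = ∫ₛᵀ (φ(·,r),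 ℒ*_{s,r}ρ) dr. Then s ↦ v(·,s) is weakly continuous and strongly left-continuous in L²(D). -/
/-!
Testing the weak short-time hypothesis against `u' = (ℒ*_{θ,t} - I) u` itself shows that
`‖(ℒ*_{θ,t} - I) u_{θ,t}‖ → 0` for every bounded family `u` as `t - θ → 0⁺`. The cocycle identity
turns the duality formula into
`(v t - v θ, ρ) = (v t, ρ - ℒ*_{θ,t} ρ) - ∫_θ^t (φ r, ℒ*_{θ,r} ρ) dr`,
and for `ρ = v t - v θ` this bounds `‖v t - v θ‖²` by
`‖v t‖ ‖(ℒ*_{θ,t} - I) ρ‖ + c₀ ‖ρ‖ ∫_θ^t ‖φ‖`, which tends to `0`. So `v` is even uniformly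
continuous in norm on `[0, T]`, which gives both weak continuity and strong left-continuity.
-/

open Set Filter Topology MeasureTheory

def intervalPairs (a b : ℝ) : Set (ℝ × ℝ) := {p | a ≤ p.1 ∧ p.1 ≤ p.2 ∧ p.2 ≤ b}

def shortSubintervals (a b : ℝ) : Filter (ℝ × ℝ) :=
  comap (fun p => p.2 - p.1) (𝓝 0) ⊓ 𝓟 (intervalPairs a b)

section ShortSubintervals

variable {X : Type*} [PseudoMetricSpace X] {a b : ℝ}

theorem intervalPairs_mem_shortSubintervals : intervalPairs a b ∈ shortSubintervals a b :=
  mem_inf_of_right (mem_principal_self _)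

theorem shortSubintervals_mono {a' b' : ℝ} (ha : a ≤ a') (hb : b' ≤ b) :
    shortSubintervals a' b' ≤ shortSubintervals a b :=
  inf_le_inf_left _ <| principal_mono.2 fun _ hp => ⟨ha.trans hp.1, hp.2.1, hp.2.2.trans hb⟩

theorem tendsto_shortSubintervals_iff {f : ℝ × ℝ → X} {x : X} :
    Tendsto f (shortSubintervals a b) (𝓝 x) ↔ ∀ δ > 0, ∃ η > 0, ∀ θ t, a ≤ θ → θ ≤ t → t ≤ b →
      t - θ < η → dist (f (θ, t)) x < δ := by
  rw [shortSubintervals,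
    ((Metric.nhds_basis_ball.comap _).inf_principal _).tendsto_iff Metric.nhds_basis_ball]
  refine forall₂_congr fun δ _ => exists_congr fun η => and_congr_right fun _ =>
    ⟨fun h θ t ha hθt htb hlt => h (θ, t) ⟨?_, ha, hθt, htb⟩,
      fun h p ⟨hp, ha, hθt, htb⟩ => h p.1 p.2 ha hθt htb ?_⟩
  · simpa [abs_of_nonneg (sub_nonneg.2 hθt)] using hlt
  · simp only [mem_preimage, Metric.mem_ball, Real.dist_0_eq_abs] at hp
    exact (le_abs_self _).trans_lt hp

theorem uniformContinuousOn_Icc_iff_tendsto_shortSubintervals {f : ℝ → X} :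
    UniformContinuousOn f (Icc a b) ↔
      Tendsto (fun p => dist (f p.2) (f p.1)) (shortSubintervals a b) (𝓝 0) := by
  rw [Metric.uniformContinuousOn_iff, tendsto_shortSubintervals_iff]
  refine forall₂_congr fun ε _ => exists_congr fun η => and_congr_right fun _ =>
    ⟨fun h θ t ha hθt htb hlt => ?_, fun h x hx y hy hxy => ?_⟩
  · rw [Real.dist_0_eq_abs, abs_of_nonneg dist_nonneg]
    refine h t ⟨ha.trans hθt, htb⟩ θ ⟨ha, hθt.trans htb⟩ ?_
    rwa [Real.dist_eq, abs_of_nonneg (sub_nonneg.2 hθt)]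
  · rw [Real.dist_eq] at hxy
    rcases le_total x y with hle | hle
    · rw [abs_sub_comm] at hxy
      simpa [dist_comm (f x)] using h x y hx.1 hle hy.2 ((le_abs_self _).trans_lt hxy)
    · simpa using h y x hy.1 hle hx.2 ((le_abs_self _).trans_lt hxy)

theorem tendsto_intervalIntegral_shortSubintervals {f : ℝ → ℝ} (hab : a ≤ b)
    (hf : IntervalIntegrable f volume a b) :
    Tendsto (fun p => ∫ r in p.1..p.2, f r) (shortSubintervals a b) (𝓝 0) := by
  have hf' : IntegrableOn f (uIcc a b) := by
    rwa [uIcc_of_le hab, ← intervalIntegrable_iff_integrableOn_Icc_of_le hab]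
  have hF : UniformContinuousOn (fun x => ∫ r in a..x, f r) (Icc a b) := by
    refine isCompact_Icc.uniformContinuousOn_of_continuous ?_
    simpa [uIcc_of_le hab] using intervalIntegral.continuousOn_primitive_interval hf'
  refine tendsto_zero_iff_norm_tendsto_zero.2 <|
    (uniformContinuousOn_Icc_iff_tendsto_shortSubintervals.1 hF).congr' <|
      eventually_of_mem intervalPairs_mem_shortSubintervals ?_
  rintro ⟨θ, t⟩ ⟨ha, hθt, htb⟩
  have hsub : ∀ x ∈ Icc a b, IntervalIntegrable f volume a x := fun x hx =>
    hf.mono_set (uIcc_subset_uIcc_left (by rwa [uIcc_of_le hab]))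
  rw [dist_eq_norm, intervalIntegral.integral_interval_sub_left (hsub t ⟨ha.trans hθt, htb⟩)
    (hsub θ ⟨ha, hθt.trans htb⟩)]

end ShortSubintervals

section EvolutionFamily

variable {E : Type*} [NormedAddCommGroup E] [InnerProductSpace ℝ E]

structure IsWeakEvolutionFamily (T c₀ : ℝ) (P : ℝ → ℝ → E →L[ℝ] E) : Prop where
  comp_eq : ∀ a θ b : ℝ, 0 ≤ a → a ≤ θ → θ ≤ b → b ≤ T → P a b = (P θ b).comp (P a θ)
  norm_le : ∀ a b : ℝ, 0 ≤ a → a ≤ b → b ≤ T → ‖P a b‖ ≤ c₀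
  tendsto_inner : ∀ u u' : ℝ → ℝ → E, ∀ C : ℝ, (∀ a b, ‖u a b‖ ≤ C) → (∀ a b, ‖u' a b‖ ≤ C) →
    Tendsto (fun p : ℝ × ℝ => inner ℝ (u' p.1 p.2) (P p.1 p.2 (u p.1 p.2) - u p.1 p.2))
      (shortSubintervals 0 T) (𝓝 0)

namespace IsWeakEvolutionFamily

variable {T c₀ : ℝ} {P : ℝ → ℝ → E →L[ℝ] E} (hP : IsWeakEvolutionFamily T c₀ P)
include hP

theorem norm_apply_le {s r : ℝ} (hs : 0 ≤ s) (hsr : s ≤ r) (hrT : r ≤ T) (ρ : E) :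
    ‖P s r ρ‖ ≤ c₀ * ‖ρ‖ :=
  ((P s r).le_opNorm ρ).trans <|
    mul_le_mul_of_nonneg_right (hP.norm_le s r hs hsr hrT) (norm_nonneg ρ)

theorem tendsto_norm_apply_sub_self {s C : ℝ} (hs : 0 ≤ s) {u : ℝ → ℝ → E}
    (hu : ∀ p ∈ intervalPairs s T, ‖u p.1 p.2‖ ≤ C) :
    Tendsto (fun p : ℝ × ℝ => ‖P p.1 p.2 (u p.1 p.2) - u p.1 p.2‖) (shortSubintervals s T)
      (𝓝 0) := by
  classical
  -- `c₀` and `C` may be negative when `intervalPairs s T` is empty, hence the absolute values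
  let w : ℝ → ℝ → E := fun a b => if (a, b) ∈ intervalPairs s T then u a b else 0
  let w' : ℝ → ℝ → E := fun a b => if (a, b) ∈ intervalPairs s T then P a b (u a b) - u a b else 0
  have hw : ∀ a b, ‖w a b‖ ≤ (|c₀| + 1) * |C| := by
    intro a b
    by_cases h : (a, b) ∈ intervalPairs s T
    · simp only [w, if_pos h]
      nlinarith [hu _ h, le_abs_self C, abs_nonneg c₀, abs_nonneg C]
    · simp only [w, if_neg h, norm_zero]
      positivity
  have hw' : ∀ a b, ‖w' a b‖ ≤ (|c₀| + 1) * |C| := by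
    intro a b
    by_cases h : (a, b) ∈ intervalPairs s T
    · simp only [w', if_pos h]
      have hC : ‖u a b‖ ≤ C := hu _ h
      calc ‖P a b (u a b) - u a b‖ ≤ c₀ * ‖u a b‖ + ‖u a b‖ :=
            (norm_sub_le _ _).trans <|
              add_le_add_left (hP.norm_apply_le (hs.trans h.1) h.2.1 h.2.2 _) _
        _ ≤ (|c₀| + 1) * |C| := by
            nlinarith [abs_nonneg c₀, le_abs_self C, le_abs_self c₀, norm_nonneg (u a b)]
    · simp only [w', if_neg h, norm_zero]
      positivity
  have hsq : Tendsto (fun p : ℝ × ℝ => ‖P p.1 p.2 (u p.1 p.2) - u p.1 p.2‖ ^ 2)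
      (shortSubintervals s T) (𝓝 0) := by
    refine ((hP.tendsto_inner w w' _ hw hw').mono_left (shortSubintervals_mono hs le_rfl)).congr' ?_
    filter_upwards [intervalPairs_mem_shortSubintervals] with p hp
    simp only [w, w', if_pos hp, real_inner_self_eq_norm_sq]
  simpa [Real.sqrt_sq (norm_nonneg _)] using hsq.sqrt

theorem continuousOn_apply {s : ℝ} (hs : 0 ≤ s) (ρ : E) :
    ContinuousOn (fun r => P s r ρ) (Icc s T) := by
  refine (uniformContinuousOn_Icc_iff_tendsto_shortSubintervals.2 ?_).continuousOn
  refine (hP.tendsto_norm_apply_sub_self hs (u := fun a _ => P s a ρ) (C := c₀ * ‖ρ‖)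
    fun p hp => hP.norm_apply_le hs hp.1 (hp.2.1.trans hp.2.2) ρ).congr' ?_
  filter_upwards [intervalPairs_mem_shortSubintervals] with p hp
  rw [dist_eq_norm, hP.comp_eq s p.1 p.2 hs hp.1 hp.2.1 hp.2.2, ContinuousLinearMap.comp_apply]

variable {φ v : ℝ → E} (hφ : IntegrableOn φ (Icc 0 T))
include hφ

theorem integrableOn_inner_apply {s : ℝ} (hs : 0 ≤ s) (ρ : E) :
    IntegrableOn (fun r => inner ℝ (φ r) (P s r ρ)) (Icc s T) := by
  have hφs : IntegrableOn φ (Icc s T) := hφ.mono_set (Icc_subset_Icc_left hs)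
  refine Integrable.mono' (hφs.norm.mul_const (c₀ * ‖ρ‖))
    (hφs.aestronglyMeasurable.inner
      ((hP.continuousOn_apply hs ρ).aestronglyMeasurable measurableSet_Icc)) ?_
  refine (ae_restrict_iff' measurableSet_Icc).2 (ae_of_all _ fun r hr => ?_)
  rw [Real.norm_eq_abs]
  exact (abs_real_inner_le_norm _ _).trans
    (mul_le_mul_of_nonneg_left (hP.norm_apply_le hs hr.1 hr.2 ρ) (norm_nonneg _))

theorem abs_integral_inner_apply_le {s a b : ℝ} (hs : 0 ≤ s) (hsa : s ≤ a) (hab : a ≤ b)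
    (hbT : b ≤ T) (ρ : E) :
    |∫ r in a..b, inner ℝ (φ r) (P s r ρ)| ≤ c₀ * ‖ρ‖ * ∫ r in a..b, ‖φ r‖ := by
  rw [← intervalIntegral.integral_const_mul, ← Real.norm_eq_abs]
  refine intervalIntegral.norm_integral_le_of_norm_le hab (ae_of_all _ fun r hr => ?_) ?_
  · rw [Real.norm_eq_abs, mul_comm]
    exact (abs_real_inner_le_norm _ _).trans (mul_le_mul_of_nonneg_left
      (hP.norm_apply_le hs (hsa.trans hr.1.le) (hr.2.trans hbT) ρ) (norm_nonneg _))
  · exact (intervalIntegrable_iff_integrableOn_Icc_of_le hab).2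
      ((hφ.mono_set (Icc_subset_Icc (hs.trans hsa) hbT)).norm.const_mul _)

variable (hv : ∀ s ∈ Icc (0 : ℝ) T, ∀ ρ : E,
  inner ℝ (v s) ρ = ∫ r in s..T, inner ℝ (φ r) (P s r ρ))
include hv

theorem norm_le_of_inner_eq {s : ℝ} (hs : s ∈ Icc 0 T) :
    ‖v s‖ ≤ c₀ * ∫ r in 0..T, ‖φ r‖ := by
  have hc₀ : 0 ≤ c₀ := (norm_nonneg _).trans (hP.norm_le s s hs.1 le_rfl hs.2)
  have hM : 0 ≤ c₀ * ∫ r in 0..T, ‖φ r‖ :=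
    mul_nonneg hc₀ (intervalIntegral.integral_nonneg (hs.1.trans hs.2) fun _ _ => norm_nonneg _)
  have htail : ∫ r in s..T, ‖φ r‖ ≤ ∫ r in 0..T, ‖φ r‖ :=
    intervalIntegral.integral_mono_interval hs.1 hs.2 le_rfl (ae_of_all _ fun _ => norm_nonneg _)
      ((intervalIntegrable_iff_integrableOn_Icc_of_le (hs.1.trans hs.2)).2 hφ.norm)
  have hsq : ‖v s‖ ^ 2 ≤ c₀ * ‖v s‖ * ∫ r in s..T, ‖φ r‖ := by
    rw [← real_inner_self_eq_norm_sq, hv s hs]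
    exact (le_abs_self _).trans (hP.abs_integral_inner_apply_le hφ hs.1 le_rfl hs.2 le_rfl _)
  nlinarith [norm_nonneg (v s),
    mul_le_mul_of_nonneg_left htail (mul_nonneg hc₀ (norm_nonneg (v s)))]

theorem inner_sub_eq {θ t : ℝ} (hθ : 0 ≤ θ) (hθt : θ ≤ t) (htT : t ≤ T) (ρ : E) :
    inner ℝ (v t - v θ) ρ =
      inner ℝ (v t) (ρ - P θ t ρ) - ∫ r in θ..t, inner ℝ (φ r) (P θ r ρ) := by
  have hint : ∀ a b, θ ≤ a → a ≤ b → b ≤ T →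
      IntervalIntegrable (fun r => inner ℝ (φ r) (P θ r ρ)) volume a b := fun a b hθa hab hbT =>
    (intervalIntegrable_iff_integrableOn_Icc_of_le hab).2
      ((hP.integrableOn_inner_apply hφ hθ ρ).mono_set (Icc_subset_Icc hθa hbT))
  have htail : inner ℝ (v t) (P θ t ρ) = ∫ r in t..T, inner ℝ (φ r) (P θ r ρ) := by
    rw [hv t ⟨hθ.trans hθt, htT⟩]
    refine intervalIntegral.integral_congr fun r hr => ?_
    rw [uIcc_of_le htT] at hr
    simp only [hP.comp_eq θ t r hθ hθt hr.1 hr.2, ContinuousLinearMap.comp_apply]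
  rw [inner_sub_left, inner_sub_right, htail, hv θ ⟨hθ, hθt.trans htT⟩,
    ← intervalIntegral.integral_add_adjacent_intervals (hint θ t le_rfl hθt htT)
      (hint t T hθt htT le_rfl)]
  ring

theorem norm_sub_sq_le {θ t : ℝ} (hθ : 0 ≤ θ) (hθt : θ ≤ t) (htT : t ≤ T) :
    ‖v t - v θ‖ ^ 2 ≤ ‖v t‖ * ‖P θ t (v t - v θ) - (v t - v θ)‖ +
      c₀ * ‖v t - v θ‖ * ∫ r in θ..t, ‖φ r‖ := by
  set ρ := v t - v θ
  calc ‖ρ‖ ^ 2 = inner ℝ (v t) (ρ - P θ t ρ) - ∫ r in θ..t, inner ℝ (φ r) (P θ r ρ) := by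
        rw [← hP.inner_sub_eq hφ hv hθ hθt htT, real_inner_self_eq_norm_sq]
    _ ≤ |inner ℝ (v t) (ρ - P θ t ρ)| + |∫ r in θ..t, inner ℝ (φ r) (P θ r ρ)| :=
        (le_abs_self _).trans (abs_sub _ _)
    _ ≤ _ := add_le_add ((abs_real_inner_le_norm _ _).trans_eq (by rw [norm_sub_rev]))
        (hP.abs_integral_inner_apply_le hφ hθ le_rfl hθt htT ρ)

theorem uniformContinuousOn_of_inner_eq (hT : 0 ≤ T) : UniformContinuousOn v (Icc 0 T) := by
  set M := c₀ * ∫ r in 0..T, ‖φ r‖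
  have hvM : ∀ s ∈ Icc 0 T, ‖v s‖ ≤ M := fun s hs => hP.norm_le_of_inner_eq hφ hv hs
  have hc₀ : 0 ≤ c₀ := (norm_nonneg _).trans (hP.norm_le 0 0 le_rfl le_rfl hT)
  have hdiff : ∀ p ∈ intervalPairs 0 T, ‖v p.2 - v p.1‖ ≤ 2 * M := fun p hp =>
    (norm_sub_le _ _).trans <| (add_le_add (hvM p.2 ⟨hp.1.trans hp.2.1, hp.2.2⟩)
      (hvM p.1 ⟨hp.1, hp.2.1.trans hp.2.2⟩)).trans_eq (two_mul M).symm
  have hX := hP.tendsto_norm_apply_sub_self le_rfl (u := fun a b => v b - v a) hdiff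
  have hY := tendsto_intervalIntegral_shortSubintervals hT
    ((intervalIntegrable_iff_integrableOn_Icc_of_le hT).2 hφ.norm)
  have hsq : Tendsto (fun p : ℝ × ℝ => ‖v p.2 - v p.1‖ ^ 2) (shortSubintervals 0 T) (𝓝 0) := by
    have hbound : Tendsto (fun p : ℝ × ℝ => M * ‖P p.1 p.2 (v p.2 - v p.1) - (v p.2 - v p.1)‖ +
        c₀ * (2 * M) * ∫ r in p.1..p.2, ‖φ r‖) (shortSubintervals 0 T) (𝓝 0) := by
      simpa using (hX.const_mul M).add (hY.const_mul (c₀ * (2 * M)))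
    refine tendsto_of_tendsto_of_tendsto_of_le_of_le' tendsto_const_nhds hbound
      (Eventually.of_forall fun _ => by positivity) ?_
    filter_upwards [intervalPairs_mem_shortSubintervals] with p hp
    refine (hP.norm_sub_sq_le hφ hv hp.1 hp.2.1 hp.2.2).trans (add_le_add ?_ ?_)
    · exact mul_le_mul_of_nonneg_right (hvM _ ⟨hp.1.trans hp.2.1, hp.2.2⟩) (norm_nonneg _)
    · exact mul_le_mul_of_nonneg_right (mul_le_mul_of_nonneg_left (hdiff p hp) hc₀)
        (intervalIntegral.integral_nonneg hp.2.1 fun _ _ => norm_nonneg _)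
  refine uniformContinuousOn_Icc_iff_tendsto_shortSubintervals.2 ?_
  simpa [dist_eq_norm, Real.sqrt_sq (norm_nonneg _)] using hsq.sqrt

end IsWeakEvolutionFamily

end EvolutionFamily

theorem stmt19_general {n : ℕ} (D : Set (EuclideanSpace ℝ (Fin n)))
    (T c₀ : ℝ) (hT : 0 ≤ T)
    (L Lstar : ℝ → ℝ → Lp ℝ 2 (volume.restrict D) →L[ℝ] Lp ℝ 2 (volume.restrict D))
    -- cocycle identity ℒ*_{s,t} = ℒ*_{θ,t} ℒ*_{s,θ}
    (hcoc : ∀ a θ b : ℝ, 0 ≤ a → a ≤ θ → θ ≤ b → b ≤ T →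
      Lstar a b = (Lstar θ b).comp (Lstar a θ))
    -- uniform bounds
    (hbdLstar : ∀ a b : ℝ, 0 ≤ a → a ≤ b → b ≤ T → ‖Lstar a b‖ ≤ c₀)
    -- weak continuity over bounded families as t − θ → 0⁺
    (hweakLstar : ∀ u u' : ℝ → ℝ → Lp ℝ 2 (volume.restrict D), ∀ C : ℝ,
      (∀ a b, ‖u a b‖ ≤ C) → (∀ a b, ‖u' a b‖ ≤ C) →
      ∀ δ > (0:ℝ), ∃ η > (0:ℝ), ∀ θ t : ℝ, 0 ≤ θ → θ ≤ t → t ≤ T → t - θ < η →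
        |(inner ℝ (u' θ t) (Lstar θ t (u θ t) - u θ t) : ℝ)| < δ)
    -- φ ∈ L¹([0,T] → L²(D))
    (φ : ℝ → Lp ℝ 2 (volume.restrict D))
    (hφ_meas : AEStronglyMeasurable φ (volume.restrict (Icc 0 T)))
    (hφ_int : IntervalIntegrable (fun t => ‖φ t‖) volume 0 T)
    -- v(·,s) is defined by duality
    (v : ℝ → Lp ℝ 2 (volume.restrict D))
    (hv : ∀ s ∈ Icc (0:ℝ) T, ∀ ρ : Lp ℝ 2 (volume.restrict D),
      (inner ℝ (v s) ρ : ℝ) = ∫ r in s..T, (inner ℝ (φ r) (Lstar s r ρ) : ℝ)) :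
    -- s ↦ v(·,s) is weakly continuous on [0,T] …
    (∀ ξ : Lp ℝ 2 (volume.restrict D),
      ContinuousOn (fun s => (inner ℝ ξ (v s) : ℝ)) (Icc 0 T)) ∧
    -- … and strongly left-continuous in L²(D)
    (∀ t ∈ Ioc (0:ℝ) T,
      Tendsto (fun θ => ‖v t - v θ‖) (nhdsWithin t (Ico 0 t)) (nhds 0)) := by
  have hP : IsWeakEvolutionFamily T c₀ Lstar := ⟨hcoc, hbdLstar, fun u u' C hu hu' =>
    tendsto_shortSubintervals_iff.2 (by simpa using hweakLstar u u' C hu hu')⟩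
  have hφ : IntegrableOn φ (Icc 0 T) :=
    (integrable_norm_iff hφ_meas).1 ((intervalIntegrable_iff_integrableOn_Icc_of_le hT).1 hφ_int)
  have hcont : ContinuousOn v (Icc 0 T) :=
    (hP.uniformContinuousOn_of_inner_eq hφ hv hT).continuousOn
  refine ⟨fun ξ => continuousOn_const.inner hcont, fun t ht => ?_⟩
  have hleft := ((hcont t ⟨ht.1.le, ht.2⟩).mono (Ico_subset_Icc_self.trans
    (Icc_subset_Icc_right ht.2))).tendsto
  simpa [norm_sub_rev] using tendsto_iff_norm_sub_tendsto_zero.1 hleft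

theorem stmt19 {n : ℕ} (D : Set (EuclideanSpace ℝ (Fin n)))
    (T c₀ : ℝ) (hT : 0 ≤ T)
    (L Lstar : ℝ → ℝ → Lp ℝ 2 (volume.restrict D) →L[ℝ] Lp ℝ 2 (volume.restrict D))
    -- mutual adjointness
    (hadj : ∀ a b : ℝ, ∀ ξ η : Lp ℝ 2 (volume.restrict D),
      (inner ℝ (L a b ξ) η : ℝ) = inner ℝ ξ (Lstar a b η))
    -- cocycle identity ℒ*_{s,t} = ℒ*_{θ,t} ℒ*_{s,θ}
    (hcoc : ∀ a θ b : ℝ, 0 ≤ a → a ≤ θ → θ ≤ b → b ≤ T →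
      Lstar a b = (Lstar θ b).comp (Lstar a θ))
    -- uniform bounds
    (hbdL : ∀ a b : ℝ, 0 ≤ a → a ≤ b → b ≤ T → ‖L a b‖ ≤ c₀)
    (hbdLstar : ∀ a b : ℝ, 0 ≤ a → a ≤ b → b ≤ T → ‖Lstar a b‖ ≤ c₀)
    -- weak continuity over bounded families as t − θ → 0⁺
    (hweakLstar : ∀ u u' : ℝ → ℝ → Lp ℝ 2 (volume.restrict D), ∀ C : ℝ,
      (∀ a b, ‖u a b‖ ≤ C) → (∀ a b, ‖u' a b‖ ≤ C) →
      ∀ δ > (0:ℝ), ∃ η > (0:ℝ), ∀ θ t : ℝ, 0 ≤ θ → θ ≤ t → t ≤ T → t - θ < η →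
        |(inner ℝ (u' θ t) (Lstar θ t (u θ t) - u θ t) : ℝ)| < δ)
    (hweakL : ∀ u u' : ℝ → ℝ → Lp ℝ 2 (volume.restrict D), ∀ C : ℝ,
      (∀ a b, ‖u a b‖ ≤ C) → (∀ a b, ‖u' a b‖ ≤ C) →
      ∀ δ > (0:ℝ), ∃ η > (0:ℝ), ∀ θ t : ℝ, 0 ≤ θ → θ ≤ t → t ≤ T → t - θ < η →
        |(inner ℝ (L θ t (u θ t) - u θ t) (u' θ t) : ℝ)| < δ)
    -- φ ∈ L¹([0,T] → L²(D))
    (φ : ℝ → Lp ℝ 2 (volume.restrict D))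
    (hφ_meas : AEStronglyMeasurable φ (volume.restrict (Icc 0 T)))
    (hφ_int : IntervalIntegrable (fun t => ‖φ t‖) volume 0 T)
    -- v(·,s) is defined by duality
    (v : ℝ → Lp ℝ 2 (volume.restrict D))
    (hv : ∀ s ∈ Icc (0:ℝ) T, ∀ ρ : Lp ℝ 2 (volume.restrict D),
      (inner ℝ (v s) ρ : ℝ) = ∫ r in s..T, (inner ℝ (φ r) (Lstar s r ρ) : ℝ)) :
    -- s ↦ v(·,s) is weakly continuous on [0,T] …
    (∀ ξ : Lp ℝ 2 (volume.restrict D),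
      ContinuousOn (fun s => (inner ℝ ξ (v s) : ℝ)) (Icc 0 T)) ∧
    -- … and strongly left-continuous in L²(D)
    (∀ t ∈ Ioc (0:ℝ) T,
      Tendsto (fun θ => ‖v t - v θ‖) (nhdsWithin t (Ico 0 t)) (nhds 0)) :=
  stmt19_general D T c₀ hT L Lstar hcoc hbdLstar hweakLstar φ hφ_meas hφ_int v hv
end
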